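/- arXiv:2105.08152 — 2 statements merged into one kernel-verified Lean document; each statement's English description precedes it below -/
import Mathlib

section
/- A functor u : A → B over a discrete set I is a Set_ex-equivalence over I if there exist: a function s : ob(B) → ob(A); a function assigning to each morphism β : b → b' in B a zigzag in A from s(b) to s(b'); a function assigning to each b ∈ B a zigzag in B from b to u(s(b)); and a function assigning to each a ∈ A a zigzag in A from a to s(u(a)). Conversely, every Set_ex-equivalence over I admits such data. -/
/-!
Over a discrete base every transition map of a coherent diagram of setoids is a transport, so a
morphism `V^* X ⟶ V^* Y` is, up to witnessed equality, a family of setoid maps `f_b` compatible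
along the arrows of `B`; this compatibility propagates along zigzags. Given the zigzag data, a
morphism `g` over `A` extends to `B` by `f_b := g_{s b}` (transported along `b ⇝ u (s b)`): the
zigzags `s b ⇝ s b'` give naturality, the zigzags `b ⇝ u (s b)` faithfulness, and the zigzags
`a ⇝ s (u a)` show that the extension restricts to `g`.

Conversely, let `W_! W^* 1` be the diagram whose fibre over `i` identifies the objects over `i`
that are joined by a zigzag. Fullness lifts the canonical point of
`(V ∘ u)^* (V ∘ u)_! (V ∘ u)^* 1` along `u^*`; the lift picks `s b` over `V b`, with zigzags
`s b ⇝ s b'` by naturality and `a ⇝ s (u a)` since it restricts to the canonical point.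
Faithfulness, applied to its image in `V^* V_! V^* 1` and the canonical point there, yields the
zigzags `b ⇝ u (s b)`.
-/

open CategoryTheory Limits

universe w v u

namespace ExCompletion

variable (E : Type u) [Category.{v} E] [HasFiniteLimits E]

/-- A pseudo-equivalence relation in a finitely complete category `E`. -/
structure PseudoEqRel where
  X0 : E
  X1 : E
  s : X1 ⟶ X0
  t : X1 ⟶ X0
  r : X0 ⟶ X1
  rs : r ≫ s = 𝟙 X0
  rt : r ≫ t = 𝟙 X0
  v : X1 ⟶ X1
  vs : v ≫ s = t
  vt : v ≫ t = s
  m : pullback t s ⟶ X1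
  ms : m ≫ s = pullback.fst t s ≫ s
  mt : m ≫ t = pullback.snd t s ≫ t

variable {E}

/-- A representative of a morphism of pseudo-equivalence relations. -/
@[ext]
structure Rep (X Y : PseudoEqRel E) where
  f0 : X.X0 ⟶ Y.X0
  f1 : X.X1 ⟶ Y.X1
  hs : f1 ≫ Y.s = X.s ≫ f0
  ht : f1 ≫ Y.t = X.t ≫ f0

/-- Two representatives are related iff there is a witness of equality. -/
def RepRel {X Y : PseudoEqRel E} (f g : Rep X Y) : Prop :=
  ∃ h : X.X0 ⟶ Y.X1, h ≫ Y.s = f.f0 ∧ h ≫ Y.t = g.f0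

theorem repRel_equivalence (X Y : PseudoEqRel E) : Equivalence (RepRel (X := X) (Y := Y)) := by
  constructor
  · intro f
    exact ⟨f.f0 ≫ Y.r, by rw [Category.assoc, Y.rs, Category.comp_id],
      by rw [Category.assoc, Y.rt, Category.comp_id]⟩
  · rintro f g ⟨h, h1, h2⟩
    exact ⟨h ≫ Y.v, by rw [Category.assoc, Y.vs, h2], by rw [Category.assoc, Y.vt, h1]⟩
  · rintro f g k ⟨h1, h1s, h1t⟩ ⟨h2, h2s, h2t⟩
    refine ⟨pullback.lift h1 h2 (by rw [h1t, h2s]) ≫ Y.m, ?_, ?_⟩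
    · rw [Category.assoc, Y.ms, ← Category.assoc, pullback.lift_fst, h1s]
    · rw [Category.assoc, Y.mt, ← Category.assoc, pullback.lift_snd, h2t]

instance repSetoid (X Y : PseudoEqRel E) : Setoid (Rep X Y) :=
  ⟨RepRel, repRel_equivalence X Y⟩

/-- The identity representative. -/
def Rep.id (X : PseudoEqRel E) : Rep X X :=
  ⟨𝟙 _, 𝟙 _, by simp, by simp⟩

/-- Composition of representatives. -/
def Rep.comp {X Y Z : PseudoEqRel E} (f : Rep X Y) (g : Rep Y Z) : Rep X Z :=
  ⟨f.f0 ≫ g.f0, f.f1 ≫ g.f1, by rw [Category.assoc, g.hs, ← Category.assoc, f.hs, Category.assoc],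
    by rw [Category.assoc, g.ht, ← Category.assoc, f.ht, Category.assoc]⟩

theorem repRel_comp {X Y Z : PseudoEqRel E} {f f' : Rep X Y} {g g' : Rep Y Z}
    (hf : RepRel f f') (hg : RepRel g g') : RepRel (f.comp g) (f'.comp g') := by
  obtain ⟨h1, h1s, h1t⟩ := hf
  obtain ⟨h2, h2s, h2t⟩ := hg
  refine (repRel_equivalence X Z).trans (y := f'.comp g) ?_ ?_
  · exact ⟨h1 ≫ g.f1, by rw [Category.assoc, g.hs, ← Category.assoc, h1s]; rfl,
      by rw [Category.assoc, g.ht, ← Category.assoc, h1t]; rfl⟩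
  · exact ⟨f'.f0 ≫ h2, by rw [Category.assoc, h2s]; rfl, by rw [Category.assoc, h2t]; rfl⟩

instance : Category.{v} (PseudoEqRel E) where
  Hom X Y := Quotient (repSetoid X Y)
  id X := ⟦Rep.id X⟧
  comp {X Y Z} := Quotient.map₂ Rep.comp (fun _ _ hf _ _ hg => repRel_comp hf hg)
  id_comp {X Y} f := by
    refine Quotient.inductionOn f (fun f => Quotient.sound ?_)
    exact ⟨f.f0 ≫ Y.r, by simp [Rep.comp, Rep.id, Y.rs], by simp [Y.rt]⟩
  comp_id {X Y} f := by
    refine Quotient.inductionOn f (fun f => Quotient.sound ?_)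
    exact ⟨f.f0 ≫ Y.r, by simp [Rep.comp, Rep.id, Y.rs], by simp [Y.rt]⟩
  assoc {W X Y Z} f g h := by
    refine Quotient.inductionOn₃ f g h (fun f g h => Quotient.sound ?_)
    exact ⟨(f.f0 ≫ g.f0 ≫ h.f0) ≫ Z.r, by simp [Rep.comp, Z.rs], by simp [Rep.comp, Z.rt]⟩

/-- The inclusion of `E` into its free exact completion, sending an object to the
discrete pseudo-equivalence relation on it. -/
noncomputable def discreteInclusion : E ⥤ PseudoEqRel E where
  obj X :=
    { X0 := X, X1 := X, s := 𝟙 X, t := 𝟙 X, r := 𝟙 X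
      rs := by simp, rt := by simp
      v := 𝟙 X, vs := by simp, vt := by simp
      m := pullback.fst (𝟙 X) (𝟙 X)
      ms := rfl
      mt := by simpa using pullback.condition (f := 𝟙 X) (g := 𝟙 X) }
  map f := ⟦⟨f, f, by simp, by simp⟩⟧
  map_id X := Quotient.sound ⟨𝟙 X, by simp [Rep.id], by simp [Rep.id]⟩
  map_comp f g := Quotient.sound ⟨f ≫ g, by simp, by simp [Rep.comp]⟩

end ExCompletion
namespace ExCompletion

noncomputable section

universe v' u'

variable {E : Type u} [Category.{v} E] [HasFiniteLimits E]
variable {A : Type u'} [Category.{v'} A]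

/-- A coherent `A`-diagram in the free exact completion `E_ex`. -/
structure CohDiag (E : Type u) [Category.{v} E] [HasFiniteLimits E]
    (A : Type u') [Category.{v'} A] where
  obj : A → PseudoEqRel E
  map : ∀ {a a' : A}, (a ⟶ a') → Rep (obj a) (obj a')
  wid : ∀ a : A, (obj a).X0 ⟶ (obj a).X1
  wid_s : ∀ a : A, wid a ≫ (obj a).s = 𝟙 _
  wid_t : ∀ a : A, wid a ≫ (obj a).t = (map (𝟙 a)).f0
  wcomp : ∀ {a a' a'' : A}, (a ⟶ a') → (a' ⟶ a'') → ((obj a).X0 ⟶ (obj a'').X1)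
  wcomp_s : ∀ {a a' a''} (α : a ⟶ a') (α' : a' ⟶ a''),
    wcomp α α' ≫ (obj a'').s = (map α).f0 ≫ (map α').f0
  wcomp_t : ∀ {a a' a''} (α : a ⟶ a') (α' : a' ⟶ a''),
    wcomp α α' ≫ (obj a'').t = (map (α ≫ α')).f0

/-- A representative of a morphism of coherent diagrams. -/
structure CohRep (X Y : CohDiag E A) where
  app : ∀ a : A, Rep (X.obj a) (Y.obj a)
  nat : ∀ {a a' : A}, (a ⟶ a') → ((X.obj a).X0 ⟶ (Y.obj a').X1)
  nat_s : ∀ {a a'} (α : a ⟶ a'), nat α ≫ (Y.obj a').s = (app a).f0 ≫ (Y.map α).f0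
  nat_t : ∀ {a a'} (α : a ⟶ a'), nat α ≫ (Y.obj a').t = (X.map α).f0 ≫ (app a').f0

/-- Witnessed equality of representatives of morphisms of coherent diagrams. -/
def CohRel {X Y : CohDiag E A} (f g : CohRep X Y) : Prop :=
  ∃ h : ∀ a : A, (X.obj a).X0 ⟶ (Y.obj a).X1,
    ∀ a, h a ≫ (Y.obj a).s = (f.app a).f0 ∧ h a ≫ (Y.obj a).t = (g.app a).f0

theorem cohRel_equivalence (X Y : CohDiag E A) : Equivalence (CohRel (X := X) (Y := Y)) := by
  constructor
  · intro f
    exact ⟨fun a => (f.app a).f0 ≫ (Y.obj a).r, fun a =>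
      ⟨by rw [Category.assoc, (Y.obj a).rs, Category.comp_id],
       by rw [Category.assoc, (Y.obj a).rt, Category.comp_id]⟩⟩
  · rintro f g ⟨h, hh⟩
    exact ⟨fun a => h a ≫ (Y.obj a).v, fun a =>
      ⟨by rw [Category.assoc, (Y.obj a).vs, (hh a).2],
       by rw [Category.assoc, (Y.obj a).vt, (hh a).1]⟩⟩
  · rintro f g k ⟨h1, hh1⟩ ⟨h2, hh2⟩
    refine ⟨fun a => pullback.lift (h1 a) (h2 a) (by rw [(hh1 a).2, (hh2 a).1]) ≫ (Y.obj a).m,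
      fun a => ⟨?_, ?_⟩⟩
    · rw [Category.assoc, (Y.obj a).ms, ← Category.assoc, pullback.lift_fst, (hh1 a).1]
    · rw [Category.assoc, (Y.obj a).mt, ← Category.assoc, pullback.lift_snd, (hh2 a).2]

instance cohSetoid (X Y : CohDiag E A) : Setoid (CohRep X Y) :=
  ⟨CohRel, cohRel_equivalence X Y⟩

/-- The identity representative of a coherent diagram. -/
def CohRep.id (X : CohDiag E A) : CohRep X X where
  app a := Rep.id (X.obj a)
  nat {a a'} α := (X.map α).f0 ≫ (X.obj a').r
  nat_s {a a'} α := by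
    rw [Category.assoc, (X.obj a').rs, Category.comp_id]; simp [Rep.id]
  nat_t {a a'} α := by
    rw [Category.assoc, (X.obj a').rt, Category.comp_id]; simp [Rep.id]

/-- Composition of representatives of morphisms of coherent diagrams. -/
def CohRep.comp {X Y Z : CohDiag E A} (f : CohRep X Y) (g : CohRep Y Z) : CohRep X Z where
  app a := (f.app a).comp (g.app a)
  nat {a a'} α :=
    pullback.lift ((f.app a).f0 ≫ g.nat α) (f.nat α ≫ (g.app a').f1)
      (by rw [Category.assoc, Category.assoc, g.nat_t, (g.app a').hs, ← Category.assoc,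
        ← Category.assoc, f.nat_s]) ≫ (Z.obj a').m
  nat_s {a a'} α := by
    rw [Category.assoc, (Z.obj a').ms, ← Category.assoc, pullback.lift_fst,
      Category.assoc, g.nat_s]
    simp [Rep.comp]
  nat_t {a a'} α := by
    rw [Category.assoc, (Z.obj a').mt, ← Category.assoc, pullback.lift_snd,
      Category.assoc, (g.app a').ht, ← Category.assoc, f.nat_t]
    simp [Rep.comp]

theorem cohRel_comp {X Y Z : CohDiag E A} {f f' : CohRep X Y} {g g' : CohRep Y Z}
    (hf : CohRel f f') (hg : CohRel g g') : CohRel (f.comp g) (f'.comp g') := by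
  obtain ⟨h1, hh1⟩ := hf
  obtain ⟨h2, hh2⟩ := hg
  refine (cohRel_equivalence X Z).trans (y := f'.comp g) ?_ ?_
  · exact ⟨fun a => h1 a ≫ (g.app a).f1, fun a =>
      ⟨by rw [Category.assoc, (g.app a).hs, ← Category.assoc, (hh1 a).1]; rfl,
       by rw [Category.assoc, (g.app a).ht, ← Category.assoc, (hh1 a).2]; rfl⟩⟩
  · exact ⟨fun a => (f'.app a).f0 ≫ h2 a, fun a =>
      ⟨by rw [Category.assoc, (hh2 a).1]; rfl, by rw [Category.assoc, (hh2 a).2]; rfl⟩⟩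

theorem cohSound {X Y : CohDiag E A} {f g : CohRep X Y}
    (hfg : ∀ a, (f.app a).f0 = (g.app a).f0) :
    (Quotient.mk (cohSetoid X Y) f) = Quotient.mk (cohSetoid X Y) g :=
  Quotient.sound ⟨fun a => (f.app a).f0 ≫ (Y.obj a).r, fun a =>
    ⟨by rw [Category.assoc, (Y.obj a).rs, Category.comp_id],
     by rw [Category.assoc, (Y.obj a).rt, Category.comp_id, hfg a]⟩⟩

instance : Category.{max u' v' v} (CohDiag E A) where
  Hom X Y := _root_.Quotient (cohSetoid X Y)
  id X := Quotient.mk _ (CohRep.id X)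
  comp {X Y Z} := Quotient.map₂ CohRep.comp (fun _ _ hf _ _ hg => cohRel_comp hf hg)
  id_comp {X Y} f := by
    refine Quotient.inductionOn f (fun f => cohSound (fun a => ?_))
    simp [CohRep.comp, CohRep.id, Rep.comp, Rep.id]
  comp_id {X Y} f := by
    refine Quotient.inductionOn f (fun f => cohSound (fun a => ?_))
    simp [CohRep.comp, CohRep.id, Rep.comp, Rep.id]
  assoc {W X Y Z} f g h := by
    refine Quotient.inductionOn₃ f g h (fun f g h => cohSound (fun a => ?_))
    simp [CohRep.comp, Rep.comp]

variable {A' : Type u'} [Category.{v'} A']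

/-- Restriction of a coherent diagram along a functor. -/
def CohDiag.restrict (u : A' ⥤ A) (X : CohDiag E A) : CohDiag E A' where
  obj a := X.obj (u.obj a)
  map {a a'} α := X.map (u.map α)
  wid a := X.wid (u.obj a)
  wid_s a := X.wid_s (u.obj a)
  wid_t a := by
    show X.wid (u.obj a) ≫ (X.obj (u.obj a)).t = (X.map (u.map (𝟙 a))).f0
    rw [show u.map (𝟙 a) = 𝟙 (u.obj a) from u.map_id a]
    exact X.wid_t (u.obj a)
  wcomp {a a' a''} α α' := X.wcomp (u.map α) (u.map α')
  wcomp_s α α' := X.wcomp_s _ _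
  wcomp_t {a a' a''} α α' := by
    show X.wcomp (u.map α) (u.map α') ≫ (X.obj (u.obj a'')).t = (X.map (u.map (α ≫ α'))).f0
    rw [show u.map (α ≫ α') = u.map α ≫ u.map α' from u.map_comp α α']
    exact X.wcomp_t _ _

/-- Restriction of a representative along a functor. -/
def CohRep.restrict (u : A' ⥤ A) {X Y : CohDiag E A} (f : CohRep X Y) :
    CohRep (X.restrict u) (Y.restrict u) where
  app a := f.app (u.obj a)
  nat {a a'} α := f.nat (u.map α)
  nat_s α := f.nat_s _
  nat_t α := f.nat_t _

/-- The restriction functor `E_ex(A) ⥤ E_ex(A')` along a functor `u : A' ⥤ A`. -/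
def restrictFunctor (E : Type u) [Category.{v} E] [HasFiniteLimits E] (u : A' ⥤ A) :
    CohDiag E A ⥤ CohDiag E A' where
  obj X := X.restrict u
  map {X Y} := Quotient.map (sa := cohSetoid X Y) (sb := cohSetoid _ _) (CohRep.restrict u) (by
    rintro f g ⟨h, hh⟩
    exact ⟨fun a => h (u.obj a), fun a => hh (u.obj a)⟩)
  map_id X := cohSound (fun a => rfl)
  map_comp {X Y Z} f g :=
    Quotient.inductionOn₂ f g (fun f g => cohSound (fun a => rfl))

/-- The constant coherent diagram on an object of `E_ex`. -/
def constObj (A : Type u') [Category.{v'} A] (X : PseudoEqRel E) : CohDiag E A where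
  obj _ := X
  map _ := Rep.id X
  wid _ := X.r
  wid_s _ := X.rs
  wid_t _ := by rw [X.rt]; rfl
  wcomp _ _ := X.r
  wcomp_s _ _ := by rw [X.rs]; simp [Rep.id]
  wcomp_t _ _ := by rw [X.rt]; rfl

/-- The constant representative on a representative. -/
def constRep (A : Type u') [Category.{v'} A] {X Y : PseudoEqRel E} (f : Rep X Y) :
    CohRep (constObj A X) (constObj A Y) where
  app _ := f
  nat _ := f.f0 ≫ Y.r
  nat_s _ := by
    show (f.f0 ≫ Y.r) ≫ Y.s = f.f0 ≫ (Rep.id Y).f0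
    rw [Category.assoc]
    rw [Y.rs]; simp [Rep.id]
  nat_t _ := by
    show (f.f0 ≫ Y.r) ≫ Y.t = (Rep.id X).f0 ≫ f.f0
    rw [Category.assoc]
    rw [Y.rt]; simp [Rep.id]

/-- The constant-diagram functor `p_A^* : E_ex ⥤ E_ex(A)`. -/
def constDiag (E : Type u) [Category.{v} E] [HasFiniteLimits E]
    (A : Type u') [Category.{v'} A] : PseudoEqRel E ⥤ CohDiag E A where
  obj X := constObj A X
  map {X Y} := Quotient.map (sa := repSetoid X Y) (sb := cohSetoid _ _) (constRep A)
    (by rintro f g ⟨h, h1, h2⟩; exact ⟨fun _ => h, fun _ => ⟨h1, h2⟩⟩)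
  map_id X := cohSound (fun a => rfl)
  map_comp {X Y Z} f g :=
    Quotient.inductionOn₂ f g (fun f g => cohSound (fun a => rfl))

end

end ExCompletion

namespace ExCompletion

/-- The type of zigzags from `x` to `y` in a category: paths in the symmetrification
of the underlying quiver. -/
def SymZigzag {A : Type u'} [Category.{v'} A] (x y : A) : Type max u' v' :=
  @Quiver.Path (Quiver.Symmetrify A) _ x y

/-- `u : A ⥤ B` (over a discrete `I`) is a `Set_ex`-equivalence over `I` when restriction
along `u` is fully faithful on the image of restriction along `v : B ⥤ Discrete I`. -/
def IsSetExEquiv {A B : Type u'} [Category.{u'} A] [Category.{u'} B] {I : Type u'}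
    (F : A ⥤ B) (V : B ⥤ Discrete I) : Prop :=
  ∀ X Y : CohDiag (Type u') (Discrete I),
    Function.Bijective
      (fun g : (restrictFunctor (Type u') V).obj X ⟶ (restrictFunctor (Type u') V).obj Y =>
        (restrictFunctor (Type u') F).map g)

/-- The data exhibiting `u : A ⥤ B` as a `Set_ex`-equivalence: a function on objects
together with functions assigning zigzags. -/
structure ZigzagData {A B : Type u'} [Category.{u'} A] [Category.{u'} B] (F : A ⥤ B) :
    Type u' where
  sec : B → A
  zmor : ∀ {b b' : B}, (b ⟶ b') → SymZigzag (sec b) (sec b')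
  zcounit : ∀ b : B, SymZigzag b (F.obj (sec b))
  zunit : ∀ a : A, SymZigzag a (sec (F.obj a))

end ExCompletion

namespace ExCompletion

open CategoryTheory Limits

universe u'

namespace PseudoEqRel

def Rel (P : PseudoEqRel (Type u)) (x y : P.X0) : Prop :=
  ∃ z : P.X1, P.s z = x ∧ P.t z = y

variable {P : PseudoEqRel (Type u)} {x y z : P.X0}

theorem Rel.refl (x : P.X0) : P.Rel x x :=
  ⟨P.r x, types_congr_hom P.rs x, types_congr_hom P.rt x⟩

theorem Rel.symm (h : P.Rel x y) : P.Rel y x := by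
  obtain ⟨w, rfl, rfl⟩ := h
  exact ⟨P.v w, types_congr_hom P.vs w, types_congr_hom P.vt w⟩

theorem Rel.trans (h : P.Rel x y) (h' : P.Rel y z) : P.Rel x z := by
  obtain ⟨w, rfl, hw⟩ := h
  obtain ⟨w', hw', rfl⟩ := h'
  let p := Concrete.pullbackMk P.t P.s w w' (hw.trans hw'.symm)
  refine ⟨P.m p, ?_, ?_⟩
  · simpa [p] using types_congr_hom P.ms p
  · simpa [p] using types_congr_hom P.mt p

end PseudoEqRel

theorem Rep.rel_f0 {P Q : PseudoEqRel (Type u)} (f : Rep P Q) {x y : P.X0} (h : P.Rel x y) :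
    Q.Rel (f.f0 x) (f.f0 y) := by
  obtain ⟨w, rfl, rfl⟩ := h
  exact ⟨f.f1 w, types_congr_hom f.hs w, types_congr_hom f.ht w⟩

noncomputable def Rep.ofRel {P Q : PseudoEqRel (Type u)} (f0 : P.X0 → Q.X0)
    (h : ∀ x y, P.Rel x y → Q.Rel (f0 x) (f0 y)) : Rep P Q where
  f0 := TypeCat.ofHom f0
  f1 := TypeCat.ofHom fun w => (h _ _ ⟨w, rfl, rfl⟩).choose
  hs := ConcreteCategory.hom_ext _ _ fun w => (h _ _ ⟨w, rfl, rfl⟩).choose_spec.1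
  ht := ConcreteCategory.hom_ext _ _ fun w => (h _ _ ⟨w, rfl, rfl⟩).choose_spec.2

section CohDiag

variable {C : Type*} [Category C] {X Y : CohDiag (Type u) C}

theorem CohDiag.rel_map_id (X : CohDiag (Type u) C) (c : C) (x : (X.obj c).X0) :
    (X.obj c).Rel x ((X.map (𝟙 c)).f0 x) :=
  ⟨X.wid c x, types_congr_hom (X.wid_s c) x, types_congr_hom (X.wid_t c) x⟩

theorem CohDiag.rel_map_comp (X : CohDiag (Type u) C) {c c' c'' : C} (γ : c ⟶ c')
    (γ' : c' ⟶ c'') (x : (X.obj c).X0) :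
    (X.obj c'').Rel ((X.map γ').f0 ((X.map γ).f0 x)) ((X.map (γ ≫ γ')).f0 x) :=
  ⟨X.wcomp γ γ' x, types_congr_hom (X.wcomp_s γ γ') x, types_congr_hom (X.wcomp_t γ γ') x⟩

theorem CohRep.rel_nat (f : CohRep X Y) {c c' : C} (γ : c ⟶ c') (x : (X.obj c).X0) :
    (Y.obj c').Rel ((Y.map γ).f0 ((f.app c).f0 x)) ((f.app c').f0 ((X.map γ).f0 x)) :=
  ⟨f.nat γ x, types_congr_hom (f.nat_s γ) x, types_congr_hom (f.nat_t γ) x⟩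

noncomputable def CohRep.ofRel (app : ∀ c, Rep (X.obj c) (Y.obj c))
    (h : ∀ {c c' : C} (γ : c ⟶ c') (x : (X.obj c).X0),
      (Y.obj c').Rel ((Y.map γ).f0 ((app c).f0 x)) ((app c').f0 ((X.map γ).f0 x))) :
    CohRep X Y where
  app := app
  nat γ := TypeCat.ofHom fun x => (h γ x).choose
  nat_s γ := ConcreteCategory.hom_ext _ _ fun x => (h γ x).choose_spec.1
  nat_t γ := ConcreteCategory.hom_ext _ _ fun x => (h γ x).choose_spec.2

theorem cohRel_iff {f g : CohRep X Y} :
    CohRel f g ↔ ∀ c x, (Y.obj c).Rel ((f.app c).f0 x) ((g.app c).f0 x) := by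
  constructor
  · rintro ⟨w, hw⟩ c x
    exact ⟨w c x, types_congr_hom (hw c).1 x, types_congr_hom (hw c).2 x⟩
  · intro h
    choose w hs ht using h
    exact ⟨fun c => TypeCat.ofHom (w c), fun c =>
      ⟨ConcreteCategory.hom_ext _ _ (hs c), ConcreteCategory.hom_ext _ _ (ht c)⟩⟩

end CohDiag

theorem SymZigzag.obj_eq {C D : Type*} [Category C] [Category D] [IsDiscrete D] (W : C ⥤ D)
    {c c' : C} (p : SymZigzag c c') : W.obj c = W.obj c' := by
  induction p with
  | nil => rfl
  | cons _ e ih =>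
    rcases e with γ | γ
    exacts [ih.trans (obj_ext_of_isDiscrete (W.map γ)),
      ih.trans (obj_ext_of_isDiscrete (W.map γ)).symm]

def SymZigzag.map {C D : Type*} [Category C] [Category D] (F : C ⥤ D) {c c' : C}
    (p : SymZigzag c c') : SymZigzag (F.obj c) (F.obj c') :=
  F.toPrefunctor.symmetrify.mapPath p

section Discrete

variable {I : Type u'}

/-- The fibrewise relations glued into one relation on the total space; since all transition maps
over a discrete base are transports, this keeps casts along equalities of indices out of sight. -/
def CohDiag.TotalRel (X : CohDiag (Type u) (Discrete I)) (p q : Σ i, (X.obj i).X0) : Prop :=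
  ∃ δ : p.1 ⟶ q.1, (X.obj q.1).Rel ((X.map δ).f0 p.2) q.2

namespace CohDiag

variable {X : CohDiag (Type u) (Discrete I)} {i j : Discrete I}

theorem totalRel_map (X : CohDiag (Type u) (Discrete I)) (δ : i ⟶ j) (x : (X.obj i).X0) :
    X.TotalRel ⟨i, x⟩ ⟨j, (X.map δ).f0 x⟩ :=
  ⟨δ, .refl _⟩

theorem TotalRel.rel_map {x : (X.obj i).X0} {y : (X.obj j).X0}
    (h : X.TotalRel ⟨i, x⟩ ⟨j, y⟩) (δ : i ⟶ j) : (X.obj j).Rel ((X.map δ).f0 x) y := by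
  obtain ⟨δ', h⟩ := h
  rwa [Subsingleton.elim δ δ']

theorem totalRel_iff_rel {x y : (X.obj i).X0} :
    X.TotalRel ⟨i, x⟩ ⟨i, y⟩ ↔ (X.obj i).Rel x y :=
  ⟨fun h => (X.rel_map_id i x).trans (h.rel_map (𝟙 i)),
    fun h => ⟨𝟙 i, (X.rel_map_id i x).symm.trans h⟩⟩

namespace TotalRel

theorem symm {p q : Σ i, (X.obj i).X0} (h : X.TotalRel p q) : X.TotalRel q p := by
  obtain ⟨δ, h⟩ := h
  refine ⟨inv δ, ((X.map (inv δ)).rel_f0 h.symm).trans ?_⟩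
  have hδ : δ ≫ inv δ = 𝟙 p.1 := Subsingleton.elim _ _
  exact (X.rel_map_comp δ (inv δ) p.2).trans (hδ ▸ (X.rel_map_id p.1 p.2).symm)

theorem trans {p q r : Σ i, (X.obj i).X0} (h : X.TotalRel p q) (h' : X.TotalRel q r) :
    X.TotalRel p r := by
  obtain ⟨δ, h⟩ := h
  obtain ⟨δ', h'⟩ := h'
  exact ⟨δ ≫ δ', (X.rel_map_comp δ δ' p.2).symm.trans (((X.map δ').rel_f0 h).trans h')⟩

end TotalRel

theorem exists_totalRel_of_hom (δ : i ⟶ j) (y : (X.obj j).X0) :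
    ∃ x : (X.obj i).X0, X.TotalRel ⟨i, x⟩ ⟨j, y⟩ :=
  ⟨_, (X.totalRel_map (inv δ) y).symm⟩

end CohDiag

section Zigzag

variable {C : Type u'} [Category.{u'} C] (W : C ⥤ Discrete I)
  {X Y : CohDiag (Type u) (Discrete I)} (f : CohRep (X.restrict W) (Y.restrict W))

theorem CohRep.totalRel_app_of_hom {c c' : C} (γ : c ⟶ c') {x : (X.obj (W.obj c)).X0}
    {x' : (X.obj (W.obj c')).X0} (h : X.TotalRel ⟨W.obj c, x⟩ ⟨W.obj c', x'⟩) :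
    Y.TotalRel ⟨W.obj c, (f.app c).f0 x⟩ ⟨W.obj c', (f.app c').f0 x'⟩ :=
  ⟨W.map γ, (f.rel_nat γ x).trans ((f.app c').rel_f0 (h.rel_map (W.map γ)))⟩

theorem CohRep.totalRel_app_of_zigzag {c c' : C} (p : SymZigzag c c')
    {x : (X.obj (W.obj c)).X0} {x' : (X.obj (W.obj c')).X0}
    (h : X.TotalRel ⟨W.obj c, x⟩ ⟨W.obj c', x'⟩) :
    Y.TotalRel ⟨W.obj c, (f.app c).f0 x⟩ ⟨W.obj c', (f.app c').f0 x'⟩ := by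
  induction p with
  | nil => exact f.totalRel_app_of_hom W (𝟙 c) h
  | cons p e ih =>
    rcases e with γ | γ
    · obtain ⟨y, hy⟩ := CohDiag.exists_totalRel_of_hom (W.map γ) x'
      exact (ih (h.trans hy.symm)).trans (f.totalRel_app_of_hom W γ hy)
    · have hy := X.totalRel_map (W.map γ) x'
      exact (ih (h.trans hy)).trans (f.totalRel_app_of_hom W γ hy).symm

end Zigzag

end Discrete

namespace ZigzagData

variable {A B I : Type u'} [Category.{u'} A] [Category.{u'} B] {F : A ⥤ B}
  (V : B ⥤ Discrete I) {X Y : CohDiag (Type u') (Discrete I)}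

def fiberHom (Z : ZigzagData F) (b : B) : V.obj b ⟶ V.obj (F.obj (Z.sec b)) :=
  eqToHom ((Z.zcounit b).obj_eq V)

theorem cohRel_of_cohRel_restrict (Z : ZigzagData F) {f f' : CohRep (X.restrict V) (Y.restrict V)}
    (h : CohRel (f.restrict F) (f'.restrict F)) : CohRel f f' := by
  refine cohRel_iff.2 fun b x => CohDiag.totalRel_iff_rel.1 ?_
  have hx := X.totalRel_map (Z.fiberHom V b) x
  have hsec := CohDiag.totalRel_iff_rel.2 (cohRel_iff.1 h (Z.sec b) ((X.map (Z.fiberHom V b)).f0 x))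
  exact (f.totalRel_app_of_zigzag V (Z.zcounit b) hx).trans
    (hsec.trans (f'.totalRel_app_of_zigzag V (Z.zcounit b) hx).symm)

variable (g : CohRep (X.restrict (F ⋙ V)) (Y.restrict (F ⋙ V)))

noncomputable def extendApp (Z : ZigzagData F) (b : B) : Rep (X.obj (V.obj b)) (Y.obj (V.obj b)) :=
  (X.map (Z.fiberHom V b)).comp ((g.app (Z.sec b)).comp (Y.map (inv (Z.fiberHom V b))))

theorem extendApp_nat (Z : ZigzagData F) {b b' : B} (β : b ⟶ b') (x : (X.obj (V.obj b)).X0) :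
    (Y.obj (V.obj b')).Rel ((Y.map (V.map β)).f0 ((Z.extendApp V g b).f0 x))
      ((Z.extendApp V g b').f0 ((X.map (V.map β)).f0 x)) := by
  set δ := Z.fiberHom V b
  set δ' := Z.fiberHom V b'
  have hx : X.TotalRel ⟨_, (X.map δ).f0 x⟩ ⟨_, (X.map δ').f0 ((X.map (V.map β)).f0 x)⟩ :=
    (X.totalRel_map δ x).symm.trans ((X.totalRel_map _ x).trans (X.totalRel_map δ' _))
  refine CohDiag.totalRel_iff_rel.1 ?_
  exact ((Y.totalRel_map (V.map β) _).symm.trans (Y.totalRel_map (inv δ) _).symm).trans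
    ((g.totalRel_app_of_zigzag (F ⋙ V) (Z.zmor β) hx).trans (Y.totalRel_map (inv δ') _))

noncomputable def extend (Z : ZigzagData F) : CohRep (X.restrict V) (Y.restrict V) :=
  CohRep.ofRel (Z.extendApp V g) (Z.extendApp_nat V g)

theorem cohRel_restrict_extend (Z : ZigzagData F) : CohRel ((Z.extend V g).restrict F) g := by
  refine cohRel_iff.2 fun a x => CohDiag.totalRel_iff_rel.1 ?_
  have hx := (X.totalRel_map (Z.fiberHom V (F.obj a)) x).symm
  exact (Y.totalRel_map _ _).symm.trans (g.totalRel_app_of_zigzag (F ⋙ V) (Z.zunit a).reverse hx)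

theorem isSetExEquiv (Z : ZigzagData F) : IsSetExEquiv F V := by
  intro X Y
  refine ⟨fun φ ψ h => ?_, fun ψ => ?_⟩
  · induction φ using Quotient.inductionOn
    induction ψ using Quotient.inductionOn
    exact Quotient.sound (Z.cohRel_of_cohRel_restrict V (Quotient.exact h))
  · induction ψ using Quotient.inductionOn with
    | h g => exact ⟨⟦Z.extend V g⟧, Quotient.sound (Z.cohRel_restrict_extend V g)⟩

end ZigzagData

noncomputable def PseudoEqRel.ofSetoid {α : Type u} (s : Setoid α) : PseudoEqRel (Type u) :=
  let src : {p : α × α // p.1 ≈ p.2} ⟶ α := TypeCat.ofHom fun p => p.1.1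
  let tgt : {p : α × α // p.1 ≈ p.2} ⟶ α := TypeCat.ofHom fun p => p.1.2
  { X0 := α
    X1 := {p : α × α // p.1 ≈ p.2}
    s := src
    t := tgt
    r := TypeCat.ofHom fun x => ⟨(x, x), Setoid.refl x⟩
    rs := rfl
    rt := rfl
    v := TypeCat.ofHom fun p => ⟨(p.1.2, p.1.1), Setoid.symm p.2⟩
    vs := rfl
    vt := rfl
    m := TypeCat.ofHom fun w => ⟨((pullback.fst tgt src w).1.1, (pullback.snd tgt src w).1.2), by
        have hw : (pullback.fst tgt src w).1.2 = (pullback.snd tgt src w).1.1 :=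
          types_congr_hom pullback.condition w
        exact Setoid.trans (pullback.fst tgt src w).2 (hw ▸ (pullback.snd tgt src w).2)⟩
    ms := rfl
    mt := rfl }

theorem PseudoEqRel.rel_ofSetoid {α : Type u} {s : Setoid α} {x y : α} :
    (ofSetoid s).Rel x y ↔ x ≈ y :=
  ⟨fun ⟨p, hs, ht⟩ => hs ▸ ht ▸ p.2, fun h => ⟨⟨(x, y), h⟩, rfl, rfl⟩⟩

section ZigzagFibers

variable {I C : Type u'} [Category.{u'} C]

/-- The fibre over `i` of `W_! W^* 1`. -/
noncomputable def zigzagFiber (W : C ⥤ Discrete I) (i : Discrete I) : PseudoEqRel (Type u') :=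
  .ofSetoid ((Quiver.zigzagSetoid C).comap (Subtype.val : {c // W.obj c = i} → C))

theorem zigzagFiber_rel_iff {W : C ⥤ Discrete I} {i : Discrete I} {x y : {c // W.obj c = i}} :
    (zigzagFiber W i).Rel x y ↔ Nonempty (SymZigzag x.1 y.1) :=
  PseudoEqRel.rel_ofSetoid

def zigzagFiberMap (W : C ⥤ Discrete I) {i j : Discrete I} (δ : i ⟶ j) :
    Rep (zigzagFiber W i) (zigzagFiber W j) where
  f0 := TypeCat.ofHom fun c => ⟨c.1, c.2.trans (obj_ext_of_isDiscrete δ)⟩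
  f1 := TypeCat.ofHom fun p => ⟨(⟨p.1.1.1, p.1.1.2.trans (obj_ext_of_isDiscrete δ)⟩,
    ⟨p.1.2.1, p.1.2.2.trans (obj_ext_of_isDiscrete δ)⟩), p.2⟩
  hs := rfl
  ht := rfl

noncomputable def zigzagFibers (W : C ⥤ Discrete I) : CohDiag (Type u') (Discrete I) where
  obj := zigzagFiber W
  map := zigzagFiberMap W
  wid i := (zigzagFiber W i).r
  wid_s i := (zigzagFiber W i).rs
  wid_t _ := rfl
  wcomp {_ _ i} δ δ' := (zigzagFiberMap W (δ ≫ δ')).f0 ≫ (zigzagFiber W i).r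
  wcomp_s _ _ := rfl
  wcomp_t _ _ := rfl

noncomputable def terminalDiag (I : Type u') : CohDiag (Type u') (Discrete I) :=
  constObj (Discrete I) (discreteInclusion.obj PUnit)

noncomputable def toZigzagFibers (W : C ⥤ Discrete I) :
    CohRep ((terminalDiag I).restrict W) ((zigzagFibers W).restrict W) :=
  CohRep.ofRel (fun c => Rep.ofRel (fun _ => ⟨c, rfl⟩) fun _ _ _ => .refl _)
    fun γ _ => zigzagFiber_rel_iff.2 ⟨(Quiver.Hom.toPos γ).toPath⟩

noncomputable def zigzagFibersMap {D : Type u'} [Category.{u'} D] (F : C ⥤ D)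
    (W : D ⥤ Discrete I) : CohRep (zigzagFibers (F ⋙ W)) (zigzagFibers W) :=
  CohRep.ofRel
    (fun _ => Rep.ofRel (fun x => ⟨F.obj x.1, x.2⟩)
      fun _ _ h => zigzagFiber_rel_iff.2 ((zigzagFiber_rel_iff.1 h).map (SymZigzag.map F)))
    fun _ _ => .refl _

end ZigzagFibers

section Forward

variable {A B I : Type u'} [Category.{u'} A] [Category.{u'} B] {F : A ⥤ B} {V : B ⥤ Discrete I}
  (f : CohRep ((terminalDiag I).restrict V) ((zigzagFibers (F ⋙ V)).restrict V))

def pointSection (b : B) : A := ((f.app b).f0 PUnit.unit).1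

theorem nonempty_zigzag_pointSection {b b' : B} (β : b ⟶ b') :
    Nonempty (SymZigzag (pointSection f b) (pointSection f b')) :=
  zigzagFiber_rel_iff.1 (f.rel_nat β PUnit.unit)

variable {f}

theorem nonempty_zigzag_pointSection_obj (hf : CohRel (f.restrict F) (toZigzagFibers (F ⋙ V)))
    (a : A) : Nonempty (SymZigzag a (pointSection f (F.obj a))) :=
  (zigzagFiber_rel_iff.1 (cohRel_iff.1 hf a PUnit.unit)).map Quiver.Path.reverse

theorem nonempty_zigzag_obj_pointSection (H : IsSetExEquiv F V)
    (hf : CohRel (f.restrict F) (toZigzagFibers (F ⋙ V))) (b : B) :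
    Nonempty (SymZigzag b (F.obj (pointSection f b))) := by
  have hk : CohRel ((f.comp ((zigzagFibersMap F V).restrict V)).restrict F)
      ((toZigzagFibers V).restrict F) :=
    cohRel_iff.2 fun a _ => zigzagFiber_rel_iff.2
      ((nonempty_zigzag_pointSection_obj hf a).map fun p => (p.map F).reverse)
  have hext := (H (terminalDiag I) (zigzagFibers V)).1 (a₁ := ⟦f.comp _⟧)
    (a₂ := ⟦toZigzagFibers V⟧) (Quotient.sound hk)
  exact (zigzagFiber_rel_iff.1 (cohRel_iff.1 (Quotient.exact hext) b PUnit.unit)).map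
    Quiver.Path.reverse

end Forward

theorem nonempty_zigzagData_of_isSetExEquiv {A B I : Type u'} [Category.{u'} A]
    [Category.{u'} B] {F : A ⥤ B} {V : B ⥤ Discrete I} (H : IsSetExEquiv F V) :
    Nonempty (ZigzagData F) := by
  obtain ⟨φ, hφ⟩ :=
    (H (terminalDiag I) (zigzagFibers (F ⋙ V))).2 ⟦toZigzagFibers (F ⋙ V)⟧
  induction φ using Quotient.inductionOn with
  | h f =>
    have hf := Quotient.exact hφ
    exact ⟨{ sec := pointSection f
             zmor := fun β => (nonempty_zigzag_pointSection f β).some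
             zcounit := fun b => (nonempty_zigzag_obj_pointSection H hf b).some
             zunit := fun a => (nonempty_zigzag_pointSection_obj hf a).some }⟩

end ExCompletion

open ExCompletion in
/-- A functor `u : A ⥤ B` over a discrete set `I` is a
`Set_ex`-equivalence over `I` if and only if there exist: a function `s : ob B → ob A`;
a function assigning to each morphism `β : b ⟶ b'` of `B` a zigzag in `A` from `s b` to
`s b'`; a function assigning to each `b` a zigzag in `B` from `b` to `u (s b)`; and a
function assigning to each `a` a zigzag in `A` from `a` to `s (u a)`. -/
theorem isSetExEquiv_iff_zigzagData
    {A B I : Type u'} [Category.{u'} A] [Category.{u'} B]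
    (F : A ⥤ B) (V : B ⥤ Discrete I) :
    Nonempty (ZigzagData F) ↔ IsSetExEquiv F V :=
  ⟨fun ⟨Z⟩ => Z.isSetExEquiv V, nonempty_zigzagData_of_isSetExEquiv⟩
end

section
/- In the derivator Set_ex, for the 'path space' construction ℘X̃ of the strictification X̃ of a coherent diagram X, the section ρ : X̃ → ℘X̃ satisfies σ∘ρ = τ∘ρ = id, and the coproduct over objects Σ_a ρ_a is a Set_ex-equivalence over ob(A); hence so are Σ_a σ_a and Σ_a τ_a. -/
open CategoryTheory Limits

universe w v u

namespace ExCompletion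

variable {A : Type u'} [Category.{u'} A]

theorem ap_rs (Z : PseudoEqRel (Type u)) (z : Z.X0) : Z.s (Z.r z) = z := by
  simpa using ConcreteCategory.congr_hom Z.rs z
theorem ap_rt (Z : PseudoEqRel (Type u)) (z : Z.X0) : Z.t (Z.r z) = z := by
  simpa using ConcreteCategory.congr_hom Z.rt z

/-- Objects of the strictification `X̃_c` of a coherent diagram `X` of setoids. -/
inductive TObj (X : CohDiag (Type u) A) (c : A) : Type max u u'
  | tri {a : A} (α : a ⟶ c) (x : (X.obj a).X0) : TObj X c
  | tup {a a' : A} (α : a ⟶ a') (x : (X.obj a).X0) (α' : a' ⟶ c) (x' : (X.obj a').X0)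
      (ξ : (X.obj a').X1) (h1 : (X.obj a').s ξ = (X.map α).f0 x)
      (h2 : (X.obj a').t ξ = x') : TObj X c

/-- The (generating) morphisms of `X̃_c`. -/
inductive TRel (X : CohDiag (Type u) A) (c : A) : TObj X c → TObj X c → Prop
  | refl (o : TObj X c) : TRel X c o o
  | toSrc {a a' : A} (α : a ⟶ a') (x : (X.obj a).X0) (α' : a' ⟶ c) (x' : (X.obj a').X0)
      (ξ : (X.obj a').X1) (h1 : (X.obj a').s ξ = (X.map α).f0 x) (h2 : (X.obj a').t ξ = x') :
      TRel X c (.tup α x α' x' ξ h1 h2) (.tri (α ≫ α') x)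
  | toTgt {a a' : A} (α : a ⟶ a') (x : (X.obj a).X0) (α' : a' ⟶ c) (x' : (X.obj a').X0)
      (ξ : (X.obj a').X1) (h1 : (X.obj a').s ξ = (X.map α).f0 x) (h2 : (X.obj a').t ξ = x') :
      TRel X c (.tup α x α' x' ξ h1 h2) (.tri α' x')

theorem TRel.comp {X : CohDiag (Type u) A} {c : A} {o1 o2 o3 : TObj X c}
    (f : TRel X c o1 o2) (g : TRel X c o2 o3) : TRel X c o1 o3 := by
  cases g with
  | refl _ => exact f
  | toSrc α x α' x' ξ h1 h2 => cases f; exact TRel.toSrc α x α' x' ξ h1 h2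
  | toTgt α x α' x' ξ h1 h2 => cases f; exact TRel.toTgt α x α' x' ξ h1 h2

instance TObj.category (X : CohDiag (Type u) A) (c : A) : Category.{max u u'} (TObj X c) where
  Hom o1 o2 := ULift.{max u u'} (PLift (TRel X c o1 o2))
  id o := ⟨⟨TRel.refl o⟩⟩
  comp f g := ⟨⟨f.down.down.comp g.down.down⟩⟩
  id_comp _ := by apply congrArg ULift.up; rfl
  comp_id _ := by apply congrArg ULift.up; rfl
  assoc _ _ _ := by apply congrArg ULift.up; rfl

/-- Objects of the path space `℘X̃_c`. -/
inductive PObj (X : CohDiag (Type u) A) (c : A) : Type max u u'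
  | tri {a : A} (α : a ⟶ c) (ζ : (X.obj a).X1) : PObj X c
  | tup {a a' : A} (α : a ⟶ a') (ζ : (X.obj a).X1) (α' : a' ⟶ c) (ζ' : (X.obj a').X1)
      (ξ ξ' : (X.obj a').X1)
      (h1 : (X.obj a').s ξ = (X.map α).f0 ((X.obj a).s ζ))
      (h2 : (X.obj a').t ξ = (X.obj a').s ζ')
      (h3 : (X.obj a').s ξ' = (X.map α).f0 ((X.obj a).t ζ))
      (h4 : (X.obj a').t ξ' = (X.obj a').t ζ') : PObj X c

/-- The (generating) morphisms of `℘X̃_c`. -/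
inductive PRel (X : CohDiag (Type u) A) (c : A) : PObj X c → PObj X c → Prop
  | refl (o : PObj X c) : PRel X c o o
  | toSrc {a a' : A} (α : a ⟶ a') (ζ : (X.obj a).X1) (α' : a' ⟶ c) (ζ' : (X.obj a').X1)
      (ξ ξ' : (X.obj a').X1) (h1 : _) (h2 : _) (h3 : _) (h4 : _) :
      PRel X c (.tup α ζ α' ζ' ξ ξ' h1 h2 h3 h4) (.tri (α ≫ α') ζ)
  | toTgt {a a' : A} (α : a ⟶ a') (ζ : (X.obj a).X1) (α' : a' ⟶ c) (ζ' : (X.obj a').X1)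
      (ξ ξ' : (X.obj a').X1) (h1 : _) (h2 : _) (h3 : _) (h4 : _) :
      PRel X c (.tup α ζ α' ζ' ξ ξ' h1 h2 h3 h4) (.tri α' ζ')

theorem PRel.comp {X : CohDiag (Type u) A} {c : A} {o1 o2 o3 : PObj X c}
    (f : PRel X c o1 o2) (g : PRel X c o2 o3) : PRel X c o1 o3 := by
  cases g with
  | refl _ => exact f
  | toSrc α ζ α' ζ' ξ ξ' h1 h2 h3 h4 => cases f; exact PRel.toSrc α ζ α' ζ' ξ ξ' h1 h2 h3 h4
  | toTgt α ζ α' ζ' ξ ξ' h1 h2 h3 h4 => cases f; exact PRel.toTgt α ζ α' ζ' ξ ξ' h1 h2 h3 h4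

instance PObj.category (X : CohDiag (Type u) A) (c : A) : Category.{max u u'} (PObj X c) where
  Hom o1 o2 := ULift.{max u u'} (PLift (PRel X c o1 o2))
  id o := ⟨⟨PRel.refl o⟩⟩
  comp f g := ⟨⟨f.down.down.comp g.down.down⟩⟩
  id_comp _ := by apply congrArg ULift.up; rfl
  comp_id _ := by apply congrArg ULift.up; rfl
  assoc _ _ _ := by apply congrArg ULift.up; rfl

/-- The first projection `σ : ℘X̃ → X̃` on objects. -/
def sObj {X : CohDiag (Type u) A} {c : A} : PObj X c → TObj X c
  | .tri α ζ => .tri α ((X.obj _).s ζ)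
  | .tup α ζ α' ζ' ξ _ h1 h2 _ _ => .tup α ((X.obj _).s ζ) α' ((X.obj _).s ζ') ξ h1 h2

/-- The second projection `τ : ℘X̃ → X̃` on objects. -/
def tObj {X : CohDiag (Type u) A} {c : A} : PObj X c → TObj X c
  | .tri α ζ => .tri α ((X.obj _).t ζ)
  | .tup α ζ α' ζ' _ ξ' _ _ h3 h4 => .tup α ((X.obj _).t ζ) α' ((X.obj _).t ζ') ξ' h3 h4

/-- The reflexivity section `ρ : X̃ → ℘X̃` on objects. -/
def rObj {X : CohDiag (Type u) A} {c : A} : TObj X c → PObj X c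
  | .tri α x => .tri α ((X.obj _).r x)
  | .tup α x α' x' ξ h1 h2 =>
      .tup α ((X.obj _).r x) α' ((X.obj _).r x') ξ ξ
        (by rw [ap_rs]; exact h1) (by rw [ap_rs]; exact h2)
        (by rw [ap_rt]; exact h1) (by rw [ap_rt]; exact h2)

theorem sRel {X : CohDiag (Type u) A} {c : A} {o1 o2 : PObj X c} (f : PRel X c o1 o2) :
    TRel X c (sObj o1) (sObj o2) := by
  cases f with
  | refl o => exact TRel.refl _
  | toSrc α ζ α' ζ' ξ ξ' h1 h2 h3 h4 => exact TRel.toSrc α _ α' _ ξ h1 h2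
  | toTgt α ζ α' ζ' ξ ξ' h1 h2 h3 h4 => exact TRel.toTgt α _ α' _ ξ h1 h2

theorem tRel {X : CohDiag (Type u) A} {c : A} {o1 o2 : PObj X c} (f : PRel X c o1 o2) :
    TRel X c (tObj o1) (tObj o2) := by
  cases f with
  | refl o => exact TRel.refl _
  | toSrc α ζ α' ζ' ξ ξ' h1 h2 h3 h4 => exact TRel.toSrc α _ α' _ ξ' h3 h4
  | toTgt α ζ α' ζ' ξ ξ' h1 h2 h3 h4 => exact TRel.toTgt α _ α' _ ξ' h3 h4

theorem rRel {X : CohDiag (Type u) A} {c : A} {o1 o2 : TObj X c} (f : TRel X c o1 o2) :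
    PRel X c (rObj o1) (rObj o2) := by
  cases f with
  | refl o => exact PRel.refl _
  | toSrc α x α' x' ξ h1 h2 => exact PRel.toSrc α _ α' _ ξ ξ _ _ _ _
  | toTgt α x α' x' ξ h1 h2 => exact PRel.toTgt α _ α' _ ξ ξ _ _ _ _

/-- The functor `σ_c : ℘X̃_c ⥤ X̃_c`. -/
def sFun (X : CohDiag (Type u) A) (c : A) : PObj X c ⥤ TObj X c where
  obj := sObj
  map f := ⟨⟨sRel f.down.down⟩⟩
  map_id _ := by apply congrArg ULift.up; rfl
  map_comp _ _ := by apply congrArg ULift.up; rfl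

/-- The functor `τ_c : ℘X̃_c ⥤ X̃_c`. -/
def tFun (X : CohDiag (Type u) A) (c : A) : PObj X c ⥤ TObj X c where
  obj := tObj
  map f := ⟨⟨tRel f.down.down⟩⟩
  map_id _ := by apply congrArg ULift.up; rfl
  map_comp _ _ := by apply congrArg ULift.up; rfl

/-- The functor `ρ_c : X̃_c ⥤ ℘X̃_c`. -/
def rFun (X : CohDiag (Type u) A) (c : A) : TObj X c ⥤ PObj X c where
  obj := rObj
  map f := ⟨⟨rRel f.down.down⟩⟩
  map_id _ := by apply congrArg ULift.up; rfl
  map_comp _ _ := by apply congrArg ULift.up; rfl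

end ExCompletion

namespace ExCompletion

variable {A : Type u'} [Category.{u'} A]

/-- The projection of the total category of the strictification to the discrete
category of objects of `A`. -/
def projT (X : CohDiag (Type u') A) : (Σ c : A, TObj X c) ⥤ Discrete A :=
  CategoryTheory.Sigma.desc fun c => (Functor.const (TObj X c)).obj ⟨c⟩

/-- The projection of the total category of the path space to the discrete category of
objects of `A`. -/
def projP (X : CohDiag (Type u') A) : (Σ c : A, PObj X c) ⥤ Discrete A :=
  CategoryTheory.Sigma.desc fun c => (Functor.const (PObj X c)).obj ⟨c⟩

end ExCompletion


/-! A morphism of coherent diagrams restricted along `B ⥤ Discrete I` has, up to witnessed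
equality, the same component at both ends of a morphism of `B`: its naturality square lies over an
identity of `Discrete I`, which `wid` witnesses equal to the identity. Components are therefore
constant along zigzags, so a fibrewise functor `Σ F` with a fibrewise functor `Σ G` back is a
`Set_ex`-equivalence as soon as every `y` is joined to `F (G y)` (this gives injectivity) and every
`x` to `G (F x)` (then restriction along `Σ G` gives preimages). For the path space, `σ ρ = τ ρ = id`
on the nose, and the tuple objects of `℘X̃` over `α = 𝟙` join `ρ (σ p)` and `ρ (τ p)` to `p`. -/

namespace ExCompletion

section Quotients

variable {E : Type u} [Category.{v} E] [HasFiniteLimits E]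

def Rep.hom {X Y : PseudoEqRel E} (f : Rep X Y) : X ⟶ Y := ⟦f⟧

theorem Rep.hom_eq_hom_iff {X Y : PseudoEqRel E} (f g : Rep X Y) :
    f.hom = g.hom ↔ RepRel f g :=
  Quotient.eq

variable {A : Type u₁} [Category.{v₁} A]

theorem CohDiag.hom_map_id (X : CohDiag E A) (a : A) : (X.map (𝟙 a)).hom = 𝟙 (X.obj a) :=
  ((Rep.hom_eq_hom_iff (Rep.id _) (X.map (𝟙 a))).2 ⟨X.wid a, X.wid_s a, X.wid_t a⟩).symm

theorem CohRep.hom_naturality {X Y : CohDiag E A} (g : CohRep X Y) {a a' : A} (α : a ⟶ a') :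
    (g.app a).hom ≫ (Y.map α).hom = (X.map α).hom ≫ (g.app a').hom :=
  (Rep.hom_eq_hom_iff ((g.app a).comp (Y.map α)) ((X.map α).comp (g.app a'))).2
    ⟨g.nat α, by rw [g.nat_s]; rfl, by rw [g.nat_t]; rfl⟩

theorem CohRep.mk_eq_mk_iff {X Y : CohDiag E A} (f g : CohRep X Y) :
    (Quotient.mk _ f : X ⟶ Y) = Quotient.mk _ g ↔ ∀ a, (f.app a).hom = (g.app a).hom := by
  refine Quotient.eq.trans ⟨fun ⟨h, hh⟩ a => Quotient.sound ⟨h a, hh a⟩, fun h => ?_⟩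
  choose k hk using fun a => Quotient.exact (h a)
  exact ⟨k, hk⟩

end Quotients

section Discrete

variable {E : Type u} [Category.{v} E] [HasFiniteLimits E] {I : Type w}

theorem CohDiag.map_eq_of_discrete (X : CohDiag E (Discrete I)) {i j : Discrete I}
    (e e' : i ⟶ j) : X.map e = X.map e' := by
  rw [Subsingleton.elim e e']

theorem sigma_mk_eq_of_naturality {X Y : CohDiag E (Discrete I)} {i j : Discrete I}
    (e : i ⟶ j) {φ : X.obj i ⟶ Y.obj i} {ψ : X.obj j ⟶ Y.obj j}
    (h : φ ≫ (Y.map e).hom = (X.map e).hom ≫ ψ) :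
    (⟨i, φ⟩ : Σ k, X.obj k ⟶ Y.obj k) = ⟨j, ψ⟩ := by
  obtain rfl : i = j := Discrete.ext (Discrete.eq_of_hom e)
  obtain rfl : e = 𝟙 i := Subsingleton.elim _ _
  rw [CohDiag.hom_map_id, CohDiag.hom_map_id, Category.comp_id, Category.id_comp] at h
  rw [h]

variable {B : Type w} [Category.{w} B] {V : B ⥤ Discrete I} {X Y : CohDiag E (Discrete I)}

def CohRep.component (g : CohRep (X.restrict V) (Y.restrict V)) (b : B) :
    Σ i : Discrete I, X.obj i ⟶ Y.obj i :=
  ⟨V.obj b, (g.app b).hom⟩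

theorem CohRep.component_eq_of_zigzag (g : CohRep (X.restrict V) (Y.restrict V)) {b b' : B}
    (h : Zigzag b b') : g.component b = g.component b' := by
  have of_hom {b₁ b₂ : B} (m : b₁ ⟶ b₂) : g.component b₁ = g.component b₂ :=
    sigma_mk_eq_of_naturality (V.map m) (g.hom_naturality m)
  induction h with
  | refl => rfl
  | tail _ hzag ih =>
    rcases hzag with ⟨⟨m⟩⟩ | ⟨⟨m⟩⟩
    · exact ih.trans (of_hom m)
    · exact ih.trans (of_hom m).symm

end Discrete

section Sigma

variable {I : Type w}

def sigmaProj (C : I → Type w) [∀ c, Category.{w} (C c)] : (Σ c, C c) ⥤ Discrete I :=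
  Sigma.desc fun c => (Functor.const (C c)).obj ⟨c⟩

variable {C D : I → Type w} [∀ c, Category.{w} (C c)] [∀ c, Category.{w} (D c)]
  {E : Type u} [Category.{v} E] [HasFiniteLimits E] {X Y : CohDiag E (Discrete I)}

theorem CohRep.hom_app_eq_of_zigzag
    (g : CohRep (X.restrict (sigmaProj C)) (Y.restrict (sigmaProj C))) {c : I} {x x' : C c}
    (h : Zigzag x x') : (g.app ⟨c, x⟩).hom = (g.app ⟨c, x'⟩).hom :=
  eq_of_heq (Sigma.mk.inj_iff.1
    (g.component_eq_of_zigzag (zigzag_obj_of_zigzag (Sigma.incl c) h))).2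

def CohRep.restrictSigma (F : ∀ c, C c ⥤ D c) (G : ∀ c, D c ⥤ C c)
    (f : CohRep ((X.restrict (sigmaProj D)).restrict (Sigma.Functor.sigma F))
      ((Y.restrict (sigmaProj D)).restrict (Sigma.Functor.sigma F))) :
    CohRep (X.restrict (sigmaProj D)) (Y.restrict (sigmaProj D)) where
  app b := f.app ((Sigma.Functor.sigma G).obj b)
  nat m := f.nat ((Sigma.Functor.sigma G).map m)
  nat_s _ := (f.nat_s _).trans (whisker_eq _ (congrArg Rep.f0 (Y.map_eq_of_discrete _ _)))
  nat_t _ := (f.nat_t _).trans (eq_whisker (congrArg Rep.f0 (X.map_eq_of_discrete _ _)) _)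

theorem isSetExEquiv_sigma_of_zigzag (F : ∀ c, C c ⥤ D c) (G : ∀ c, D c ⥤ C c)
    (hFG : ∀ c (y : D c), Zigzag y ((F c).obj ((G c).obj y)))
    (hGF : ∀ c (x : C c), Zigzag x ((G c).obj ((F c).obj x))) :
    IsSetExEquiv (Sigma.Functor.sigma F) (sigmaProj D) := by
  intro X Y
  constructor
  · rintro ⟨g₁⟩ ⟨g₂⟩ h
    have h' := (CohRep.mk_eq_mk_iff (g₁.restrict (Sigma.Functor.sigma F))
      (g₂.restrict (Sigma.Functor.sigma F))).1 h
    refine (CohRep.mk_eq_mk_iff g₁ g₂).2 fun ⟨c, y⟩ => ?_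
    exact (g₁.hom_app_eq_of_zigzag (hFG c y)).trans
      ((h' ⟨c, (G c).obj y⟩).trans (g₂.hom_app_eq_of_zigzag (hFG c y)).symm)
  · rintro ⟨f⟩
    refine ⟨Quotient.mk _ (f.restrictSigma F G), (CohRep.mk_eq_mk_iff _ f).2 fun ⟨c, x⟩ => ?_⟩
    -- `f` lives over `Σ F ⋙ sigmaProj D`, which is not `sigmaProj C` on morphisms.
    have := f.component_eq_of_zigzag (V := Sigma.Functor.sigma F ⋙ sigmaProj D)
      (zigzag_obj_of_zigzag (Sigma.incl c) (hGF c x))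
    exact (eq_of_heq (Sigma.mk.inj_iff.1 this).2).symm

end Sigma

section Setoids

variable (Z : PseudoEqRel (Type u))

theorem ap_vs (ξ : Z.X1) : Z.s (Z.v ξ) = Z.t ξ := by
  simpa using ConcreteCategory.congr_hom Z.vs ξ

theorem ap_vt (ξ : Z.X1) : Z.t (Z.v ξ) = Z.s ξ := by
  simpa using ConcreteCategory.congr_hom Z.vt ξ

def PseudoEqRel.Related (x y : Z.X0) : Prop := ∃ ξ : Z.X1, Z.s ξ = x ∧ Z.t ξ = y

theorem PseudoEqRel.related_equivalence : Equivalence Z.Related where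
  refl x := ⟨Z.r x, ap_rs Z x, ap_rt Z x⟩
  symm := fun ⟨ξ, hs, ht⟩ => ⟨Z.v ξ, (ap_vs Z ξ).trans ht, (ap_vt Z ξ).trans hs⟩
  trans := fun ⟨ξ, hξs, hξt⟩ ⟨η, hηs, hηt⟩ => by
    let p := (Types.pullbackIsoPullback Z.t Z.s).inv ⟨(ξ, η), hξt.trans hηs.symm⟩
    refine ⟨Z.m p, ?_, ?_⟩
    · simpa [p, hξs] using ConcreteCategory.congr_hom Z.ms p
    · simpa [p, hηt] using ConcreteCategory.congr_hom Z.mt p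

theorem CohDiag.related_map_id {A : Type u₁} [Category.{v₁} A] (X : CohDiag (Type u) A) (a : A)
    (x : (X.obj a).X0) : (X.obj a).Related x ((X.map (𝟙 a)).f0 x) :=
  ⟨X.wid a x, by simpa using ConcreteCategory.congr_hom (X.wid_s a) x,
    by simpa using ConcreteCategory.congr_hom (X.wid_t a) x⟩

end Setoids

section PathSpace

variable {A : Type u'} [Category.{u'} A] {X : CohDiag (Type u) A} {c : A}

instance (o o' : TObj X c) : Subsingleton (o ⟶ o') :=
  ⟨fun ⟨⟨_⟩⟩ ⟨⟨_⟩⟩ => rfl⟩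

theorem sObj_rObj (o : TObj X c) : sObj (rObj o) = o := by
  cases o <;> simp only [rObj, sObj, ap_rs]

theorem tObj_rObj (o : TObj X c) : tObj (rObj o) = o := by
  cases o <;> simp only [rObj, tObj, ap_rt]

theorem rFun_comp_sFun (X : CohDiag (Type u) A) (c : A) : rFun X c ⋙ sFun X c = 𝟭 _ :=
  CategoryTheory.Functor.ext sObj_rObj fun _ _ _ => Subsingleton.elim _ _

theorem rFun_comp_tFun (X : CohDiag (Type u) A) (c : A) : rFun X c ⋙ tFun X c = 𝟭 _ :=
  CategoryTheory.Functor.ext tObj_rObj fun _ _ _ => Subsingleton.elim _ _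

theorem PRel.zigzag {p q : PObj X c} (h : PRel X c p q) : Zigzag p q :=
  Zigzag.of_hom ⟨⟨h⟩⟩

theorem PObj.zigzag_tri {a : A} (α : a ⟶ c) {ζ₀ ζ : (X.obj a).X1}
    (hs : (X.obj a).Related ((X.obj a).s ζ₀) ((X.obj a).s ζ))
    (ht : (X.obj a).Related ((X.obj a).t ζ₀) ((X.obj a).t ζ)) :
    Zigzag (PObj.tri α ζ₀ : PObj X c) (PObj.tri α ζ) := by
  have e := (X.obj a).related_equivalence
  obtain ⟨ξ, h₁, h₂⟩ := e.trans (e.symm (X.related_map_id a _)) hs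
  obtain ⟨ξ', h₃, h₄⟩ := e.trans (e.symm (X.related_map_id a _)) ht
  have toSrc := PRel.toSrc (c := c) (𝟙 a) ζ₀ α ζ ξ ξ' h₁ h₂ h₃ h₄
  rw [Category.id_comp] at toSrc
  exact toSrc.zigzag.symm.trans (PRel.toTgt _ _ _ _ _ _ _ _ _ _).zigzag

theorem PObj.zigzag_rObj_sObj (p : PObj X c) : Zigzag (rObj (sObj p)) p := by
  have tri {a : A} (α : a ⟶ c) (ζ : (X.obj a).X1) :
      Zigzag (rObj (sObj (PObj.tri α ζ))) (PObj.tri α ζ) :=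
    zigzag_tri α (by rw [ap_rs]; exact (X.obj a).related_equivalence.refl _)
      (by rw [ap_rt]; exact ⟨ζ, rfl, rfl⟩)
  cases p with
  | tri α ζ => exact tri α ζ
  | tup α ζ α' ζ' ξ ξ' h₁ h₂ h₃ h₄ =>
    exact (PRel.toTgt _ _ _ _ _ _ _ _ _ _).zigzag.trans
      ((tri α' ζ').trans (PRel.toTgt _ _ _ _ _ _ _ _ _ _).zigzag.symm)

theorem PObj.zigzag_rObj_tObj (p : PObj X c) : Zigzag (rObj (tObj p)) p := by
  have tri {a : A} (α : a ⟶ c) (ζ : (X.obj a).X1) :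
      Zigzag (rObj (tObj (PObj.tri α ζ))) (PObj.tri α ζ) :=
    zigzag_tri α (by rw [ap_rs]; exact ⟨_, ap_vs _ ζ, ap_vt _ ζ⟩)
      (by rw [ap_rt]; exact (X.obj a).related_equivalence.refl _)
  cases p with
  | tri α ζ => exact tri α ζ
  | tup α ζ α' ζ' ξ ξ' h₁ h₂ h₃ h₄ =>
    exact (PRel.toTgt _ _ _ _ _ _ _ _ _ _).zigzag.trans
      ((tri α' ζ').trans (PRel.toTgt _ _ _ _ _ _ _ _ _ _).zigzag.symm)

end PathSpace

end ExCompletion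

open ExCompletion in
/-- In the derivator `Set_ex`, for the path space `℘X̃` of the
strictification `X̃` of a coherent diagram `X`, the reflexivity section `ρ : X̃ → ℘X̃`
satisfies `σ ∘ ρ = τ ∘ ρ = id`, and the coproduct over objects `Σ_a ρ_a` is a
`Set_ex`-equivalence over `ob A`; hence so are `Σ_a σ_a` and `Σ_a τ_a`. -/
theorem pathSpace_section_is_setExEquiv
    {A : Type u'} [Category.{u'} A] (X : CohDiag (Type u') A) :
    (∀ c : A, rFun X c ⋙ sFun X c = 𝟭 (TObj X c)) ∧
    (∀ c : A, rFun X c ⋙ tFun X c = 𝟭 (TObj X c)) ∧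
    IsSetExEquiv (CategoryTheory.Sigma.desc fun c => rFun X c ⋙ Sigma.incl c) (projP X) ∧
    IsSetExEquiv (CategoryTheory.Sigma.desc fun c => sFun X c ⋙ Sigma.incl c) (projT X) ∧
    IsSetExEquiv (CategoryTheory.Sigma.desc fun c => tFun X c ⋙ Sigma.incl c) (projT X) := by
  have zigzag_sObj_rObj (c : A) (o : TObj X c) : Zigzag o (sObj (rObj o)) :=
    Zigzag.of_hom (eqToHom (sObj_rObj o).symm)
  have zigzag_tObj_rObj (c : A) (o : TObj X c) : Zigzag o (tObj (rObj o)) :=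
    Zigzag.of_hom (eqToHom (tObj_rObj o).symm)
  refine ⟨rFun_comp_sFun X, rFun_comp_tFun X, ?_, ?_, ?_⟩
  · exact isSetExEquiv_sigma_of_zigzag (rFun X) (sFun X)
      (fun _ p => (PObj.zigzag_rObj_sObj p).symm) zigzag_sObj_rObj
  · exact isSetExEquiv_sigma_of_zigzag (sFun X) (rFun X)
      zigzag_sObj_rObj (fun _ p => (PObj.zigzag_rObj_sObj p).symm)
  · exact isSetExEquiv_sigma_of_zigzag (tFun X) (rFun X)
      zigzag_tObj_rObj (fun _ p => (PObj.zigzag_rObj_tObj p).symm)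
end
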